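/- For every ε ∈ (0,1), the cubic 2y³ − 3y² + b(ε) has three distinct real roots, and y₁(ε) = (2 − 3ε − √(4 − 3ε²))/4 and y₂(ε) = (2 + 3ε − √(4 − 3ε²))/4 are the two smallest of them; the third root is greater than 1. -/

import Mathlib

/-- The parameter `b(ε) = 1/2 − ((1 − 3ε²)/4)·√(4 − 3ε²)` of the Sasaki–Einstein
metric `Y^{p,q}`, with `ε = q/p`. -/
noncomputable def ypqB (ε : ℝ) : ℝ :=
  1/2 - ((1 - 3*ε^2)/4) * Real.sqrt (4 - 3*ε^2)

/-- The endpoint `y₁(ε) = (2 − 3ε − √(4 − 3ε²))/4`. -/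
noncomputable def ypqY1 (ε : ℝ) : ℝ := (2 - 3*ε - Real.sqrt (4 - 3*ε^2))/4

/-- The endpoint `y₂(ε) = (2 + 3ε − √(4 − 3ε²))/4`. -/
noncomputable def ypqY2 (ε : ℝ) : ℝ := (2 + 3*ε - Real.sqrt (4 - 3*ε^2))/4

/-!
Writing `s = √(4 − 3ε²)`, the cubic factors as `2 (y − y₁)(y − y₂)(y − y₃)` with
`y₃ = (1 + s)/2`: the three roots sum to `3/2`, and the remaining symmetric functions
match `b(ε)` once `s²` is replaced by `4 − 3ε²`. For `ε ∈ (0,1)` one has `1 < s` and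
`ε < s`, which orders the roots as `y₁ < y₂ < y₃` and puts `y₃` above `1`.
-/

noncomputable def ypqY3 (ε : ℝ) : ℝ := (1 + Real.sqrt (4 - 3*ε^2))/2

theorem ypq_cubic_eq_mul {ε : ℝ} (hε : 3*ε^2 ≤ 4) (y : ℝ) :
    2*y^3 - 3*y^2 + ypqB ε = 2*(y - ypqY1 ε)*(y - ypqY2 ε)*(y - ypqY3 ε) := by
  have hs : Real.sqrt (4 - 3*ε^2) ^ 2 = 4 - 3*ε^2 := Real.sq_sqrt (by linarith)
  unfold ypqB ypqY1 ypqY2 ypqY3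
  linear_combination (Real.sqrt (4 - 3*ε^2)/16 + 3*y/8 - 3/16) * hs

theorem one_lt_sqrt_four_sub_three_mul_sq {ε : ℝ} (hε : ε^2 < 1) :
    1 < Real.sqrt (4 - 3*ε^2) :=
  Real.lt_sqrt_of_sq_lt (by linarith)

theorem lt_sqrt_four_sub_three_mul_sq {ε : ℝ} (hε : ε^2 < 1) : ε < Real.sqrt (4 - 3*ε^2) :=
  Real.lt_sqrt_of_sq_lt (by linarith)

theorem one_lt_ypqY3 {ε : ℝ} (hε : ε^2 < 1) : 1 < ypqY3 ε := by
  have := one_lt_sqrt_four_sub_three_mul_sq hε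
  unfold ypqY3; linarith

theorem ypqY1_lt_ypqY2 {ε : ℝ} (hε : 0 < ε) : ypqY1 ε < ypqY2 ε := by
  unfold ypqY1 ypqY2; linarith

theorem ypqY2_lt_ypqY3 {ε : ℝ} (hε : ε^2 < 1) : ypqY2 ε < ypqY3 ε := by
  have := lt_sqrt_four_sub_three_mul_sq hε
  unfold ypqY2 ypqY3; linarith

/-- For every `ε ∈ (0,1)`, the cubic `2y³ − 3y² + b(ε)` has three distinct real
roots; `y₁(ε)` and `y₂(ε)` are the two smallest of them, and the third root is
greater than `1`. -/
theorem ypq_cubic_three_roots :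
    ∀ ε ∈ Set.Ioo (0 : ℝ) 1, ∃ y₃ : ℝ,
      1 < y₃ ∧ ypqY1 ε < ypqY2 ε ∧ ypqY2 ε < y₃ ∧
      ∀ y : ℝ, 2*y^3 - 3*y^2 + ypqB ε = 0 ↔ (y = ypqY1 ε ∨ y = ypqY2 ε ∨ y = y₃) := by
  rintro ε ⟨hε_pos, hε_lt_one⟩
  have hε_sq : ε^2 < 1 := by nlinarith
  refine ⟨ypqY3 ε, one_lt_ypqY3 hε_sq, ypqY1_lt_ypqY2 hε_pos, ypqY2_lt_ypqY3 hε_sq, fun y => ?_⟩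
  rw [ypq_cubic_eq_mul (by linarith)]
  simp only [mul_eq_zero, two_ne_zero, false_or, sub_eq_zero, or_assoc]
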